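/- For every integer k ≥ 2, the pigeonhole principle formula PHP^k_{k−1} has a Lasserre refutation of rank 2. -/

import Mathlib

namespace NarrowProofs

open MvPolynomial

/-- A clause is a finite set of literals; a literal is a variable together with a
sign (`true` = positive literal, `false` = negative literal). -/
abbrev Clause (V : Type) := Finset (V × Bool)

/-- Twin-variable alphabet: `(v, false)` is the variable `v` itself and
`(v, true)` is its twin `v̄` (intended value `1 − v`). -/
abbrev PV (V : Type) := V × Bool

/-- The expansion of one term of a Sherali-Adams style derivation:
`∏_{i∈I} x_i · ∏_{j∈J} (1−x_j) · p`. -/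
noncomputable def expandTerm {σ : Type} (I J : Finset σ) (p : MvPolynomial σ ℝ) :
    MvPolynomial σ ℝ :=
  (∏ i ∈ I, X i) * (∏ j ∈ J, (1 - X j)) * p

/-- A Sherali-Adams style derivation of the inequality `r ≥ 0`, where each
`p_t` must come from the allowed set `Ax`: a formula
`∑_t α_t · ∏_{i∈I_t} x_i · ∏_{j∈J_t} (1−x_j) · p_t` with `α_t ≥ 0` that
expands to the polynomial `r`. -/
structure SAStyleDeriv (σ : Type) (Ax : Set (MvPolynomial σ ℝ))
    (r : MvPolynomial σ ℝ) where
  len : ℕ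
  α : Fin len → ℝ
  I : Fin len → Finset σ
  J : Fin len → Finset σ
  p : Fin len → MvPolynomial σ ℝ
  alpha_nonneg : ∀ t, 0 ≤ α t
  p_mem : ∀ t, p t ∈ Ax
  sums : ∑ t, α t • expandTerm (I t) (J t) (p t) = r

/-- The rank of the derivation is at most `d`: every expanded term has total
degree at most `d`. -/
def SAStyleDeriv.rankLE {σ : Type} {Ax : Set (MvPolynomial σ ℝ)}
    {r : MvPolynomial σ ℝ} (der : SAStyleDeriv σ Ax r) (d : ℕ) : Prop :=
  ∀ t, (expandTerm (der.I t) (der.J t) (der.p t)).totalDegree ≤ d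

/-- The size of the derivation: the total number of terms of the expanded
polynomials. -/
noncomputable def SAStyleDeriv.size {σ : Type} {Ax : Set (MvPolynomial σ ℝ)}
    {r : MvPolynomial σ ℝ} (der : SAStyleDeriv σ Ax r) : ℕ :=
  ∑ t, (expandTerm (der.I t) (der.J t) (der.p t)).support.card

/-- Boolean axioms `x²−x` and `x−x²`. -/
def boolAxioms (σ : Type) : Set (MvPolynomial σ ℝ) :=
  {p | ∃ x : σ, p = X x ^ 2 - X x ∨ p = X x - X x ^ 2}

/-- The polynomials allowed in a Sherali-Adams derivation from hypotheses `Q`: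
a hypothesis, a Boolean axiom, or the constant 1. -/
def SAAxioms (σ : Type) (Q : Set (MvPolynomial σ ℝ)) : Set (MvPolynomial σ ℝ) :=
  Q ∪ boolAxioms σ ∪ {1}

/-- The polynomials allowed in a Lasserre derivation from hypotheses `Q`:
a hypothesis, a Boolean axiom, the constant 1, or the square of an arbitrary
polynomial. -/
def LasAxioms (σ : Type) (Q : Set (MvPolynomial σ ℝ)) : Set (MvPolynomial σ ℝ) :=
  SAAxioms σ Q ∪ {p | ∃ q : MvPolynomial σ ℝ, p = q ^ 2}

/-- The SA encoding (truth = 1) of a clause: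
`∑_{i∈I} x_i + ∑_{j∈J} (1−x_j) − 1`. -/
noncomputable def encodeIneqSA {V : Type} [DecidableEq V] (C : Clause V) :
    MvPolynomial V ℝ :=
  (∑ l ∈ C, if l.2 then X l.1 else (1 - X l.1)) - 1

/-- The pigeonhole principle formula `PHP^k_{k−1}` with `k` pigeons and `k−1`
holes; the variable `(u, w)` means pigeon `u` sits in hole `w` (1-based
indices). -/
def PHPf (k : ℕ) : Set (Clause (ℕ × ℕ)) :=
  { C |
    (∃ u, 1 ≤ u ∧ u ≤ k ∧
      C = (Finset.Icc 1 (k - 1)).image (fun w => (((u, w) : ℕ × ℕ), true))) ∨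
    (∃ u v w, 1 ≤ u ∧ u ≤ k ∧ 1 ≤ v ∧ v ≤ k ∧ u ≠ v ∧ 1 ≤ w ∧ w ≤ k - 1 ∧
      C = {(((u, w) : ℕ × ℕ), false), (((v, w) : ℕ × ℕ), false)}) }


/-! For a hole `w` write `y_u = x_{u,w}` and `S = ∑_u y_u`. The rank-2 identity
`1 - S = (1 - S)² + ∑_u (y_u - y_u²) + ∑_{u ≠ v} (y_u (1 - y_u - y_v) + (y_u² - y_u))`
derives `1 - S ≥ 0` ("at most one pigeon in hole `w`") from a square, Boolean axioms and the hole
clauses multiplied by `y_u`. Adding these `k - 1` inequalities to the `k` pigeon clauses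
`∑_w x_{u,w} - 1 ≥ 0`, all variables cancel and `(k - 1) - k = -1` remains. -/

section Derivations

variable {σ : Type} {Ax : Set (MvPolynomial σ ℝ)}

def SAStyleDeriv.nil : SAStyleDeriv σ Ax 0 where
  len := 0
  α := Fin.elim0
  I := Fin.elim0
  J := Fin.elim0
  p := Fin.elim0
  alpha_nonneg := fun t => t.elim0
  p_mem := fun t => t.elim0
  sums := by simp

noncomputable def SAStyleDeriv.ofMem (I J : Finset σ) {p : MvPolynomial σ ℝ} (hp : p ∈ Ax) :
    SAStyleDeriv σ Ax (expandTerm I J p) where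
  len := 1
  α := fun _ => 1
  I := fun _ => I
  J := fun _ => J
  p := fun _ => p
  alpha_nonneg := fun _ => zero_le_one
  p_mem := fun _ => hp
  sums := by simp

def SAStyleDeriv.append {r s : MvPolynomial σ ℝ} (d₁ : SAStyleDeriv σ Ax r)
    (d₂ : SAStyleDeriv σ Ax s) : SAStyleDeriv σ Ax (r + s) where
  len := d₁.len + d₂.len
  α := Fin.append d₁.α d₂.α
  I := Fin.append d₁.I d₂.I
  J := Fin.append d₁.J d₂.J
  p := Fin.append d₁.p d₂.p
  alpha_nonneg := Fin.addCases (by simpa using d₁.alpha_nonneg) (by simpa using d₂.alpha_nonneg)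
  p_mem := Fin.addCases (by simpa using d₁.p_mem) (by simpa using d₂.p_mem)
  sums := by simp [Fin.sum_univ_add, d₁.sums, d₂.sums]

theorem SAStyleDeriv.rankLE_append {r s : MvPolynomial σ ℝ} {d₁ : SAStyleDeriv σ Ax r}
    {d₂ : SAStyleDeriv σ Ax s} {n : ℕ} (h₁ : d₁.rankLE n) (h₂ : d₂.rankLE n) :
    (d₁.append d₂).rankLE n :=
  Fin.addCases (fun i => by simpa [append] using h₁ i) (fun i => by simpa [append] using h₂ i)

def derivableAtRank (Ax : Set (MvPolynomial σ ℝ)) (n : ℕ) : AddSubmonoid (MvPolynomial σ ℝ) where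
  carrier := {r | ∃ d : SAStyleDeriv σ Ax r, d.rankLE n}
  zero_mem' := ⟨.nil, fun t => t.elim0⟩
  add_mem' := fun ⟨d₁, h₁⟩ ⟨d₂, h₂⟩ => ⟨d₁.append d₂, SAStyleDeriv.rankLE_append h₁ h₂⟩

theorem expandTerm_mem_derivableAtRank {I J : Finset σ} {p : MvPolynomial σ ℝ} {n : ℕ}
    (hp : p ∈ Ax) (hn : (expandTerm I J p).totalDegree ≤ n) :
    expandTerm I J p ∈ derivableAtRank Ax n :=
  ⟨.ofMem I J hp, fun _ => hn⟩

theorem mem_derivableAtRank_of_mem {p : MvPolynomial σ ℝ} {n : ℕ} (hp : p ∈ Ax)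
    (hn : p.totalDegree ≤ n) : p ∈ derivableAtRank Ax n := by
  simpa [expandTerm] using
    expandTerm_mem_derivableAtRank (I := ∅) (J := ∅) hp (by simpa [expandTerm] using hn)

theorem X_mul_mem_derivableAtRank (i : σ) {p : MvPolynomial σ ℝ} {n : ℕ} (hp : p ∈ Ax)
    (hn : (X i * p).totalDegree ≤ n) : X i * p ∈ derivableAtRank Ax n := by
  simpa [expandTerm] using
    expandTerm_mem_derivableAtRank (I := {i}) (J := ∅) hp (by simpa [expandTerm] using hn)

end Derivations

section LasserreAxioms

variable {σ : Type} {Q : Set (MvPolynomial σ ℝ)}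

theorem mem_lasAxioms_of_mem {p : MvPolynomial σ ℝ} (hp : p ∈ Q) : p ∈ LasAxioms σ Q :=
  Or.inl (Or.inl (Or.inl hp))

theorem sq_mem_lasAxioms (q : MvPolynomial σ ℝ) : q ^ 2 ∈ LasAxioms σ Q :=
  Or.inr ⟨q, rfl⟩

theorem X_sq_sub_X_mem_lasAxioms (i : σ) : X i ^ 2 - X i ∈ LasAxioms σ Q :=
  Or.inl (Or.inl (Or.inr ⟨i, Or.inl rfl⟩))

theorem X_sub_X_sq_mem_lasAxioms (i : σ) : X i - X i ^ 2 ∈ LasAxioms σ Q :=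
  Or.inl (Or.inl (Or.inr ⟨i, Or.inr rfl⟩))

end LasserreAxioms

section Degree

variable {σ : Type} {p q : MvPolynomial σ ℝ} {m n : ℕ}

theorem totalDegree_sub_le_of_le (hp : p.totalDegree ≤ n) (hq : q.totalDegree ≤ n) :
    (p - q).totalDegree ≤ n :=
  (totalDegree_sub p q).trans (max_le hp hq)

theorem totalDegree_mul_le_of_le (hp : p.totalDegree ≤ m) (hq : q.totalDegree ≤ n) :
    (p * q).totalDegree ≤ m + n :=
  (totalDegree_mul p q).trans (add_le_add hp hq)

theorem totalDegree_sum_X_le_one {ι : Type} (s : Finset ι) (f : ι → σ) :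
    (∑ i ∈ s, X (f i) : MvPolynomial σ ℝ).totalDegree ≤ 1 :=
  (totalDegree_finsetSum _ _).trans (Finset.sup_le fun i _ => (totalDegree_X (f i)).le)

end Degree

/-- For `u ≠ v` the summand is `-y u * y v`, so the last sum cancels the cross terms of the
square. -/
theorem one_sub_sum_eq_sq_add_sum_add_sum {ι R : Type*} [DecidableEq ι] [CommRing R]
    (s : Finset ι) (y : ι → R) :
    1 - ∑ u ∈ s, y u = (1 - ∑ u ∈ s, y u) ^ 2 + ∑ u ∈ s, (y u - y u ^ 2) +
        ∑ u ∈ s, ∑ v ∈ s.erase u, (y u * (1 - y u - y v) + (y u ^ 2 - y u)) := by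
  symm
  have cross (u : ι) (hu : u ∈ s) :
      ∑ v ∈ s.erase u, (y u * (1 - y u - y v) + (y u ^ 2 - y u)) =
        y u ^ 2 - y u * ∑ v ∈ s, y v := by
    rw [Finset.sum_congr rfl fun v _ => show y u * (1 - y u - y v) + (y u ^ 2 - y u) =
      -(y u * y v) by ring, Finset.sum_neg_distrib, ← Finset.mul_sum,
      Finset.sum_erase_eq_sub hu]
    ring
  rw [Finset.sum_congr rfl cross, Finset.sum_sub_distrib, Finset.sum_sub_distrib,
    ← Finset.sum_mul]
  ring

theorem sum_sub_one_add_sum_one_sub {ι κ R : Type*} [CommRing R] (s : Finset ι) (t : Finset κ)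
    (x : ι → κ → R) :
    ∑ u ∈ s, (∑ w ∈ t, x u w - 1) + ∑ w ∈ t, (1 - ∑ u ∈ s, x u w) = t.card - s.card := by
  simp only [Finset.sum_sub_distrib, Finset.sum_const, nsmul_eq_mul, mul_one]
  rw [Finset.sum_comm]
  ring

theorem encodeIneqSA_positive_image {V ι : Type} [DecidableEq V] (s : Finset ι) {f : ι → V}
    (hf : Function.Injective f) :
    encodeIneqSA (s.image fun i => (f i, true)) = ∑ i ∈ s, X (f i) - 1 := by
  rw [encodeIneqSA, Finset.sum_image fun _ _ _ _ h => hf (Prod.ext_iff.mp h).1]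
  rfl

theorem encodeIneqSA_negative_pair {V : Type} [DecidableEq V] {a b : V} (hab : a ≠ b) :
    encodeIneqSA ({(a, false), (b, false)} : Clause V) = 1 - X a - X b := by
  rw [encodeIneqSA, Finset.sum_pair (by simpa using hab)]
  simp only [Bool.false_eq_true, if_false]
  ring

section Pigeonhole

abbrev phpLasAxioms (k : ℕ) : Set (MvPolynomial (ℕ × ℕ) ℝ) :=
  LasAxioms (ℕ × ℕ) ((fun C => encodeIneqSA C) '' PHPf k)

variable {k : ℕ}

theorem pigeon_mem_phpLasAxioms {u : ℕ} (hu₁ : 1 ≤ u) (hu : u ≤ k) :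
    ∑ w ∈ Finset.Icc 1 (k - 1), X (u, w) - 1 ∈ phpLasAxioms k := by
  refine mem_lasAxioms_of_mem ⟨_, Or.inl ⟨u, hu₁, hu, rfl⟩, ?_⟩
  exact encodeIneqSA_positive_image _ fun _ _ h => (Prod.ext_iff.mp h).2

theorem hole_mem_phpLasAxioms {u v w : ℕ} (hu₁ : 1 ≤ u) (hu : u ≤ k) (hv₁ : 1 ≤ v) (hv : v ≤ k)
    (huv : u ≠ v) (hw₁ : 1 ≤ w) (hw : w ≤ k - 1) :
    1 - X (u, w) - X (v, w) ∈ phpLasAxioms k := by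
  refine mem_lasAxioms_of_mem ⟨_, Or.inr ⟨u, v, w, hu₁, hu, hv₁, hv, huv, hw₁, hw, rfl⟩, ?_⟩
  exact encodeIneqSA_negative_pair fun h => huv (Prod.ext_iff.mp h).1

theorem pigeon_mem_derivableAtRank {u : ℕ} (hu₁ : 1 ≤ u) (hu : u ≤ k) :
    ∑ w ∈ Finset.Icc 1 (k - 1), X (u, w) - 1 ∈ derivableAtRank (phpLasAxioms k) 2 := by
  refine mem_derivableAtRank_of_mem (pigeon_mem_phpLasAxioms hu₁ hu) ?_
  exact totalDegree_sub_le_of_le ((totalDegree_sum_X_le_one _ _).trans one_le_two) (by simp)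

theorem one_sub_sum_mem_derivableAtRank {w : ℕ} (hw₁ : 1 ≤ w) (hw : w ≤ k - 1) :
    1 - ∑ u ∈ Finset.Icc 1 k, X (u, w) ∈ derivableAtRank (phpLasAxioms k) 2 := by
  rw [one_sub_sum_eq_sq_add_sum_add_sum]
  refine add_mem (add_mem ?square ?boolean)
    (sum_mem fun u hu => sum_mem fun v hv => add_mem ?lifted_hole ?boolean')
  case square =>
    have hlin := totalDegree_sub_le_of_le (totalDegree_one.trans_le zero_le_one)
      (totalDegree_sum_X_le_one (Finset.Icc 1 k) fun u => (u, w))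
    refine mem_derivableAtRank_of_mem (sq_mem_lasAxioms _) ?_
    rw [sq]
    exact totalDegree_mul_le_of_le hlin hlin
  case boolean =>
    exact sum_mem fun u _ => mem_derivableAtRank_of_mem (X_sub_X_sq_mem_lasAxioms _)
      (totalDegree_sub_le_of_le (by simp) (by simp [totalDegree_X_pow]))
  case lifted_hole =>
    obtain ⟨hu₁, hu⟩ := Finset.mem_Icc.mp hu
    obtain ⟨hvu, hv⟩ := Finset.mem_erase.mp hv
    obtain ⟨hv₁, hv⟩ := Finset.mem_Icc.mp hv
    exact X_mul_mem_derivableAtRank _ (hole_mem_phpLasAxioms hu₁ hu hv₁ hv hvu.symm hw₁ hw)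
      (totalDegree_mul_le_of_le (totalDegree_X _).le
        (totalDegree_sub_le_of_le (totalDegree_sub_le_of_le (totalDegree_one.trans_le zero_le_one)
          (totalDegree_X _).le) (totalDegree_X _).le))
  case boolean' =>
    exact mem_derivableAtRank_of_mem (X_sq_sub_X_mem_lasAxioms _)
      (totalDegree_sub_le_of_le (by simp [totalDegree_X_pow]) (by simp))

end Pigeonhole

/-- for every `k ≥ 2`, the pigeonhole principle formula
`PHP^k_{k−1}` has a Lasserre refutation of rank 2. -/
theorem php_lasserre_rank_two (k : ℕ) (hk : 2 ≤ k) :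
    ∃ d : SAStyleDeriv (ℕ × ℕ)
        (LasAxioms (ℕ × ℕ) ((fun C => encodeIneqSA C) '' PHPf k)) (-1),
      d.rankLE 2 := by
  have hcard : ((Finset.Icc 1 (k - 1)).card - (Finset.Icc 1 k).card : MvPolynomial (ℕ × ℕ) ℝ)
      = -1 := by
    rw [Nat.card_Icc, Nat.card_Icc, Nat.add_sub_cancel, Nat.add_sub_cancel,
      Nat.cast_sub (by omega)]
    ring
  have hmem : (-1 : MvPolynomial (ℕ × ℕ) ℝ) ∈ derivableAtRank (phpLasAxioms k) 2 := by
    rw [← hcard, ← sum_sub_one_add_sum_one_sub _ _ fun u w => X (u, w)]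
    refine add_mem (sum_mem fun u hu => ?_) (sum_mem fun w hw => ?_)
    · exact pigeon_mem_derivableAtRank (Finset.mem_Icc.mp hu).1 (Finset.mem_Icc.mp hu).2
    · exact one_sub_sum_mem_derivableAtRank (Finset.mem_Icc.mp hw).1 (Finset.mem_Icc.mp hw).2
  exact hmem

end NarrowProofs
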